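/- arXiv:2202.02771 — 8 statements merged into one kernel-verified Lean document; each statement's English description precedes it below -/
import Mathlib

section
/- Let n, b, M, d be positive integers, L̄ > 0 and α ∈ ℝ. For each m ∈ {1, …, M} let F_{m,1}, …, F_{m,n} : ℝ^d → ℝ^d satisfy (1/n) Σ_{i=1}^n ‖F_{m,i}(u) − F_{m,i}(v)‖² ≤ L̄² ‖u − v‖² for all u, v ∈ ℝ^d, and set F_m = (1/n) Σ_{i=1}^n F_{m,i}. Fix 𝐳, 𝐳', 𝐰 ∈ (ℝ^d)^M. Let the M·b random indices j_{m,l} (m ∈ {1,…,M}, l ∈ {1,…,b}) be independent and uniformly distributed on {1, …, n}, and define the random vector δ ∈ (ℝ^d)^M whose m-th block is δ_m = (1/b) Σ_{l=1}^b [ F_{m,j_{m,l}}(z_m) − F_{m,j_{m,l}}(w_m) + α ( F_{m,j_{m,l}}(z_m) − F_{m,j_{m,l}}(z'_m) ) ] + F_m(w_m). Then E[δ] = 𝔽(𝐳) + α(𝔽(𝐳) − 𝔽(𝐳')) and E‖δ − E[δ]‖² ≤ (2 L̄²/b) ( ‖𝐳 − 𝐰‖² + α² ‖𝐳 − 𝐳'‖²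 ). -/
/-!
Averaging over all `ω : Fin M × Fin b → Fin n` is the expectation over i.i.d. uniform indices.
Each coordinate `ω p` is uniform, so every minibatch average is unbiased. Distinct coordinates are
independent, so once the samples are centred the cross terms of `‖∑ₗ Xₗ‖²` average to zero: the
variance of the mean of `b` samples is `1/b` times the variance of one sample, which is at most
its second moment. By `‖a + α b‖² ≤ 2‖a‖² + 2α²‖b‖²` and the mean-square Lipschitz bound, the
second moment in block `m` is at most `2 L̄² (‖zₘ - wₘ‖² + α² ‖zₘ - z'ₘ‖²)`.
-/

open scoped RealInnerProductSpace

theorem norm_add_sq_le_two_mul {E : Type*} [SeminormedAddCommGroup E] (x y : E) :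
    ‖x + y‖ ^ 2 ≤ 2 * (‖x‖ ^ 2 + ‖y‖ ^ 2) :=
  (pow_le_pow_left₀ (norm_nonneg _) (norm_add_le x y) 2).trans add_sq_le

section InnerProductSpace

variable {κ E : Type*} [Fintype κ] [NormedAddCommGroup E] [InnerProductSpace ℝ E]

theorem sum_norm_sub_sq_le_of_sum_eq_card_smul {x : κ → E} {c : E}
    (hc : ∑ k, x k = (Fintype.card κ : ℝ) • c) :
    ∑ k, ‖x k - c‖ ^ 2 ≤ ∑ k, ‖x k‖ ^ 2 := by
  have hcross : ∑ k, ⟪x k, c⟫ = Fintype.card κ * ‖c‖ ^ 2 := by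
    rw [← sum_inner, hc, real_inner_smul_left, real_inner_self_eq_norm_sq]
  have hexpand : ∑ k, ‖x k - c‖ ^ 2 = ∑ k, ‖x k‖ ^ 2 - Fintype.card κ * ‖c‖ ^ 2 := by
    simp only [norm_sub_sq_real, Finset.sum_add_distrib, Finset.sum_sub_distrib,
      ← Finset.mul_sum, hcross, Finset.sum_const, Finset.card_univ, nsmul_eq_mul]
    ring
  rw [hexpand]
  have : 0 ≤ (Fintype.card κ : ℝ) * ‖c‖ ^ 2 := by positivity
  linarith

theorem mul_sum_norm_sq_extrapolated_diff_le {G : κ → E → E} {c L : ℝ} (hc : 0 ≤ c)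
    (hG : ∀ u v, c * ∑ k, ‖G k u - G k v‖ ^ 2 ≤ L ^ 2 * ‖u - v‖ ^ 2) (α : ℝ) (z z' w : E) :
    c * ∑ k, ‖G k z - G k w + α • (G k z - G k z')‖ ^ 2 ≤
      2 * L ^ 2 * (‖z - w‖ ^ 2 + α ^ 2 * ‖z - z'‖ ^ 2) := by
  calc c * ∑ k, ‖G k z - G k w + α • (G k z - G k z')‖ ^ 2
      ≤ c * ∑ k, 2 * (‖G k z - G k w‖ ^ 2 + α ^ 2 * ‖G k z - G k z'‖ ^ 2) := by
        gcongr with k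
        simpa [norm_smul, mul_pow] using norm_add_sq_le_two_mul _ (α • (G k z - G k z'))
    _ = 2 * (c * ∑ k, ‖G k z - G k w‖ ^ 2 + α ^ 2 * (c * ∑ k, ‖G k z - G k z'‖ ^ 2)) := by
        simp only [← Finset.mul_sum, Finset.sum_add_distrib]; ring
    _ ≤ 2 * (L ^ 2 * ‖z - w‖ ^ 2 + α ^ 2 * (L ^ 2 * ‖z - z'‖ ^ 2)) := by
        gcongr 2 * (?_ + α ^ 2 * ?_) <;> apply hG
    _ = 2 * L ^ 2 * (‖z - w‖ ^ 2 + α ^ 2 * ‖z - z'‖ ^ 2) := by ring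

end InnerProductSpace

section UniformIndices

variable {ι κ V : Type*} [Fintype ι] [DecidableEq ι] [Fintype κ]
  [AddCommGroup V] [Module ℝ V]

theorem inv_card_smul_sum_const {α : Type*} [Fintype α] [Nonempty α] (v : V) :
    (Fintype.card α : ℝ)⁻¹ • ∑ _a : α, v = v := by
  rw [Finset.sum_const, Finset.card_univ, ← Nat.cast_smul_eq_nsmul ℝ, smul_smul,
    inv_mul_cancel₀ (Nat.cast_ne_zero.2 Fintype.card_ne_zero), one_smul]

theorem inv_card_smul_sum_fun_eq_funSplitAt (p : ι) (G : (ι → κ) → V) :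
    (Fintype.card (ι → κ) : ℝ)⁻¹ • ∑ ω, G ω =
      (Fintype.card κ : ℝ)⁻¹ • ∑ k, (Fintype.card ({j // j ≠ p} → κ) : ℝ)⁻¹ •
        ∑ f, G ((Equiv.funSplitAt p κ).symm (k, f)) := by
  rw [Fintype.card_congr (Equiv.funSplitAt p κ), Fintype.card_prod, Nat.cast_mul, mul_inv,
    mul_smul, ← (Equiv.funSplitAt p κ).symm.sum_comp, Fintype.sum_prod_type, Finset.smul_sum]

theorem inv_card_smul_sum_fun_apply (p : ι) (h : κ → V) :
    (Fintype.card (ι → κ) : ℝ)⁻¹ • ∑ ω : ι → κ, h (ω p) =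
      (Fintype.card κ : ℝ)⁻¹ • ∑ k, h k := by
  rw [inv_card_smul_sum_fun_eq_funSplitAt p]
  congr 1
  refine Finset.sum_congr rfl fun k _ => ?_
  have : Nonempty κ := ⟨k⟩
  simp only [Equiv.funSplitAt_symm_apply, dite_true]
  exact inv_card_smul_sum_const (h k)

theorem inv_card_smul_sum_fun_apply₂ {p q : ι} (hpq : p ≠ q) (h : κ → κ → V) :
    (Fintype.card (ι → κ) : ℝ)⁻¹ • ∑ ω : ι → κ, h (ω p) (ω q) =
      (Fintype.card κ : ℝ)⁻¹ • ∑ k, (Fintype.card κ : ℝ)⁻¹ • ∑ j, h k j := by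
  rw [inv_card_smul_sum_fun_eq_funSplitAt p]
  congr 1
  refine Finset.sum_congr rfl fun k _ => ?_
  simpa [Equiv.funSplitAt, hpq.symm] using
    inv_card_smul_sum_fun_apply (⟨q, hpq.symm⟩ : {j // j ≠ p}) (h k)

theorem inv_card_mul_sum_inner_fun_apply {E : Type*} [NormedAddCommGroup E]
    [InnerProductSpace ℝ E] {p q : ι} (u v : κ → E) (hv : ∑ k, v k = 0) :
    (Fintype.card (ι → κ) : ℝ)⁻¹ * ∑ ω : ι → κ, ⟪u (ω p), v (ω q)⟫ =
      if p = q then (Fintype.card κ : ℝ)⁻¹ * ∑ k, ⟪u k, v k⟫ else 0 := by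
  split_ifs with hpq
  · subst hpq
    exact inv_card_smul_sum_fun_apply p fun k => ⟪u k, v k⟫
  · rw [← smul_eq_mul, inv_card_smul_sum_fun_apply₂ hpq fun k j => ⟪u k, v j⟫]
    simp [← inner_sum, hv]

/-- Distinct coordinates of `ω` are independent, so centred terms are uncorrelated. -/
theorem inv_card_mul_sum_norm_sq_sum_of_injective {E τ : Type*} [NormedAddCommGroup E]
    [InnerProductSpace ℝ E] [Fintype τ] {e : τ → ι} (he : Function.Injective e)
    (v : τ → κ → E) (hv : ∀ t, ∑ k, v t k = 0) :
    (Fintype.card (ι → κ) : ℝ)⁻¹ * ∑ ω : ι → κ, ‖∑ t, v t (ω (e t))‖ ^ 2 =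
      (Fintype.card κ : ℝ)⁻¹ * ∑ t, ∑ k, ‖v t k‖ ^ 2 := by
  have hexpand : ∀ ω : ι → κ, ‖∑ t, v t (ω (e t))‖ ^ 2 =
      ∑ t, ∑ t', ⟪v t (ω (e t)), v t' (ω (e t'))⟫ := by
    intro ω
    simp_rw [← real_inner_self_eq_norm_sq, sum_inner, inner_sum]
  simp_rw [hexpand]
  rw [Finset.sum_comm, Finset.mul_sum, Finset.mul_sum]
  refine Finset.sum_congr rfl fun t _ => ?_
  rw [Finset.sum_comm, Finset.mul_sum]
  rw [Finset.sum_congr rfl fun t' _ => inv_card_mul_sum_inner_fun_apply (v t) (v t') (hv t')]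
  classical
  simp_rw [he.eq_iff, Finset.sum_ite_eq, Finset.mem_univ, if_true, real_inner_self_eq_norm_sq]

variable {τ : Type*} [Fintype τ] [Nonempty τ]

theorem inv_card_smul_sum_minibatch [Nonempty κ] (e : τ → ι) {g : κ → V} {c : V}
    (hg : ∑ k, g k = (Fintype.card κ : ℝ) • c) :
    (Fintype.card (ι → κ) : ℝ)⁻¹ • ∑ ω : ι → κ, (Fintype.card τ : ℝ)⁻¹ • ∑ t, g (ω (e t)) = c := by
  have hκ : (Fintype.card κ : ℝ) ≠ 0 := Nat.cast_ne_zero.2 Fintype.card_ne_zero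
  rw [← Finset.smul_sum, smul_comm, Finset.sum_comm, Finset.smul_sum]
  simp_rw [inv_card_smul_sum_fun_apply, hg, smul_smul, inv_mul_cancel₀ hκ, one_smul]
  exact inv_card_smul_sum_const c

theorem inv_card_mul_sum_norm_sq_minibatch_sub_le {E : Type*} [NormedAddCommGroup E]
    [InnerProductSpace ℝ E] {e : τ → ι} (he : Function.Injective e) {g : κ → E} {c : E}
    (hg : ∑ k, g k = (Fintype.card κ : ℝ) • c) :
    (Fintype.card (ι → κ) : ℝ)⁻¹ * ∑ ω : ι → κ, ‖(Fintype.card τ : ℝ)⁻¹ • ∑ t, g (ω (e t)) - c‖ ^ 2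
      ≤ (Fintype.card τ : ℝ)⁻¹ * ((Fintype.card κ : ℝ)⁻¹ * ∑ k, ‖g k‖ ^ 2) := by
  have hcentred : ∀ ω : ι → κ, (Fintype.card τ : ℝ)⁻¹ • ∑ t, g (ω (e t)) - c =
      (Fintype.card τ : ℝ)⁻¹ • ∑ t, (g (ω (e t)) - c) := fun ω => by
    rw [Finset.sum_sub_distrib, smul_sub, inv_card_smul_sum_const]
  have hsum_centred : ∑ k, (g k - c) = 0 := by
    rw [Finset.sum_sub_distrib, hg, Finset.sum_const, Finset.card_univ,
      ← Nat.cast_smul_eq_nsmul ℝ, sub_self]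
  have hτ : (Fintype.card τ : ℝ) ≠ 0 := Nat.cast_ne_zero.2 Fintype.card_ne_zero
  calc (Fintype.card (ι → κ) : ℝ)⁻¹ * ∑ ω : ι → κ,
        ‖(Fintype.card τ : ℝ)⁻¹ • ∑ t, g (ω (e t)) - c‖ ^ 2
      = (Fintype.card τ : ℝ)⁻¹ ^ 2 *
          ((Fintype.card (ι → κ) : ℝ)⁻¹ * ∑ ω : ι → κ, ‖∑ t, (g (ω (e t)) - c)‖ ^ 2) := by
        simp_rw [hcentred, norm_smul, mul_pow, Real.norm_eq_abs, sq_abs, ← Finset.mul_sum]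
        ring
    _ = (Fintype.card τ : ℝ)⁻¹ * ((Fintype.card κ : ℝ)⁻¹ * ∑ k, ‖g k - c‖ ^ 2) := by
        rw [inv_card_mul_sum_norm_sq_sum_of_injective he (fun _ k => g k - c) fun _ => hsum_centred,
          Finset.sum_const, Finset.card_univ, nsmul_eq_mul]
        field_simp
    _ ≤ (Fintype.card τ : ℝ)⁻¹ * ((Fintype.card κ : ℝ)⁻¹ * ∑ k, ‖g k‖ ^ 2) := by
        gcongr _ * (_ * ?_)
        exact sum_norm_sub_sq_le_of_sum_eq_card_smul hg

end UniformIndices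

theorem stmt_5_general (n b M d : ℕ) (hn : 0 < n) (hb : 0 < b)
    (Lbar α : ℝ)
    (F : Fin M → Fin n → (EuclideanSpace ℝ (Fin d) → EuclideanSpace ℝ (Fin d)))
    (havg : ∀ m, ∀ u v : EuclideanSpace ℝ (Fin d),
      (1 / (n : ℝ)) * ∑ i, ‖F m i u - F m i v‖ ^ 2 ≤ Lbar ^ 2 * ‖u - v‖ ^ 2)
    (Fm : Fin M → EuclideanSpace ℝ (Fin d) → EuclideanSpace ℝ (Fin d))
    (hFm : ∀ m x, Fm m x = (1 / (n : ℝ)) • ∑ i, F m i x)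
    (z z' w : PiLp 2 (fun _ : Fin M => EuclideanSpace ℝ (Fin d)))
    (δ : ((Fin M × Fin b) → Fin n) → PiLp 2 (fun _ : Fin M => EuclideanSpace ℝ (Fin d)))
    (hδ : ∀ ω m, δ ω m =
      (1 / (b : ℝ)) • (∑ l : Fin b,
        (F m (ω (m, l)) (z m) - F m (ω (m, l)) (w m)
          + α • (F m (ω (m, l)) (z m) - F m (ω (m, l)) (z' m))))
      + Fm m (w m))
    (Eδ : PiLp 2 (fun _ : Fin M => EuclideanSpace ℝ (Fin d)))
    (hEδ : Eδ = ((Fintype.card ((Fin M × Fin b) → Fin n) : ℝ))⁻¹ • ∑ ω, δ ω) :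
    (∀ m, Eδ m = Fm m (z m) + α • (Fm m (z m) - Fm m (z' m))) ∧
    ((Fintype.card ((Fin M × Fin b) → Fin n) : ℝ))⁻¹ * (∑ ω, ‖δ ω - Eδ‖ ^ 2) ≤
      (2 * Lbar ^ 2 / b) * (‖z - w‖ ^ 2 + α ^ 2 * ‖z - z'‖ ^ 2) := by
  have : NeZero n := ⟨hn.ne'⟩
  have : NeZero b := ⟨hb.ne'⟩
  set g : Fin M → Fin n → EuclideanSpace ℝ (Fin d) := fun m i =>
    F m i (z m) - F m i (w m) + α • (F m i (z m) - F m i (z' m))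
  set gb : Fin M → EuclideanSpace ℝ (Fin d) := fun m =>
    Fm m (z m) - Fm m (w m) + α • (Fm m (z m) - Fm m (z' m))
  have hsum_F : ∀ m x, ∑ i, F m i x = (Fintype.card (Fin n) : ℝ) • Fm m x := fun m x => by
    rw [hFm, smul_smul, Fintype.card_fin, mul_one_div_cancel (NeZero.ne _), one_smul]
  have hsum_g : ∀ m, ∑ i, g m i = (Fintype.card (Fin n) : ℝ) • gb m := fun m => by
    simp only [g, gb, Finset.sum_add_distrib, Finset.sum_sub_distrib, ← Finset.smul_sum, hsum_F]
    module
  have hδ' : ∀ ω m, δ ω m = (Fintype.card (Fin b) : ℝ)⁻¹ • ∑ l, g m (ω (m, l)) + Fm m (w m) := by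
    simpa only [Fintype.card_fin, one_div] using hδ
  have hmean : ∀ m, Eδ m = gb m + Fm m (w m) := fun m => by
    rw [hEδ, PiLp.smul_apply, WithLp.ofLp_sum, Finset.sum_apply]
    simp_rw [hδ' _ m, Finset.sum_add_distrib, smul_add,
      inv_card_smul_sum_minibatch (Prod.mk m) (hsum_g m), inv_card_smul_sum_const]
  refine ⟨fun m => by rw [hmean m]; module, ?_⟩
  have hcentred : ∀ ω m, (δ ω - Eδ) m =
      (Fintype.card (Fin b) : ℝ)⁻¹ • ∑ l, g m (ω (m, l)) - gb m := fun ω m => by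
    rw [PiLp.sub_apply, hδ', hmean]
    abel
  have hnorm_sq := PiLp.norm_sq_eq_of_L2 (fun _ : Fin M => EuclideanSpace ℝ (Fin d))
  calc _ = ∑ m, (Fintype.card ((Fin M × Fin b) → Fin n) : ℝ)⁻¹ * ∑ ω : (Fin M × Fin b) → Fin n,
          ‖(Fintype.card (Fin b) : ℝ)⁻¹ • ∑ l, g m (ω (m, l)) - gb m‖ ^ 2 := by
        simp_rw [hnorm_sq, hcentred]
        rw [Finset.sum_comm, Finset.mul_sum]
    _ ≤ ∑ m, (Fintype.card (Fin b) : ℝ)⁻¹ * ((Fintype.card (Fin n) : ℝ)⁻¹ * ∑ i, ‖g m i‖ ^ 2) :=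
        Finset.sum_le_sum fun m _ =>
          inv_card_mul_sum_norm_sq_minibatch_sub_le (Prod.mk_right_injective m) (hsum_g m)
    _ ≤ ∑ m, (b : ℝ)⁻¹ * (2 * Lbar ^ 2 * (‖z m - w m‖ ^ 2 + α ^ 2 * ‖z m - z' m‖ ^ 2)) := by
        simp only [Fintype.card_fin, ← one_div]
        refine Finset.sum_le_sum fun m _ => mul_le_mul_of_nonneg_left ?_ (by positivity)
        exact mul_sum_norm_sq_extrapolated_diff_le (by positivity) (havg m) α _ _ _
    _ = (2 * Lbar ^ 2 / b) * (‖z - w‖ ^ 2 + α ^ 2 * ‖z - z'‖ ^ 2) := by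
        simp only [hnorm_sq, PiLp.sub_apply, Finset.mul_sum, ← Finset.sum_add_distrib]
        exact Finset.sum_congr rfl fun m _ => by ring

/-- Bias and variance of the variance-reduced estimator `δ` of Algorithm 1
(first part of Lemma E.1): the `M·b` indices `j_{m,l}` are i.i.d. uniform on
`{1,…,n}`, modeled as a uniformly distributed element `ω` of the finite space
`(Fin M × Fin b) → Fin n`. -/
theorem stmt_5 (n b M d : ℕ) (hn : 0 < n) (hb : 0 < b) (hM : 0 < M) (hd : 0 < d)
    (Lbar α : ℝ) (hLbar : 0 < Lbar)
    (F : Fin M → Fin n → (EuclideanSpace ℝ (Fin d) → EuclideanSpace ℝ (Fin d)))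
    (havg : ∀ m, ∀ u v : EuclideanSpace ℝ (Fin d),
      (1 / (n : ℝ)) * ∑ i, ‖F m i u - F m i v‖ ^ 2 ≤ Lbar ^ 2 * ‖u - v‖ ^ 2)
    (Fm : Fin M → EuclideanSpace ℝ (Fin d) → EuclideanSpace ℝ (Fin d))
    (hFm : ∀ m x, Fm m x = (1 / (n : ℝ)) • ∑ i, F m i x)
    (z z' w : PiLp 2 (fun _ : Fin M => EuclideanSpace ℝ (Fin d)))
    (δ : ((Fin M × Fin b) → Fin n) → PiLp 2 (fun _ : Fin M => EuclideanSpace ℝ (Fin d)))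
    (hδ : ∀ ω m, δ ω m =
      (1 / (b : ℝ)) • (∑ l : Fin b,
        (F m (ω (m, l)) (z m) - F m (ω (m, l)) (w m)
          + α • (F m (ω (m, l)) (z m) - F m (ω (m, l)) (z' m))))
      + Fm m (w m))
    (Eδ : PiLp 2 (fun _ : Fin M => EuclideanSpace ℝ (Fin d)))
    (hEδ : Eδ = ((Fintype.card ((Fin M × Fin b) → Fin n) : ℝ))⁻¹ • ∑ ω, δ ω) :
    (∀ m, Eδ m = Fm m (z m) + α • (Fm m (z m) - Fm m (z' m))) ∧
    ((Fintype.card ((Fin M × Fin b) → Fin n) : ℝ))⁻¹ * (∑ ω, ‖δ ω - Eδ‖ ^ 2) ≤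
      (2 * Lbar ^ 2 / b) * (‖z - w‖ ^ 2 + α ^ 2 * ‖z - z'‖ ^ 2) :=
  stmt_5_general n b M d hn hb Lbar α F havg Fm hFm z z' w δ hδ Eδ hEδ
end

section
/- Let n, b, M, d be positive integers and L̄, L > 0. For each m ∈ {1, …, M} let F_{m,1}, …, F_{m,n} : ℝ^d → ℝ^d satisfy (1/n) Σ_{i=1}^n ‖F_{m,i}(u) − F_{m,i}(v)‖² ≤ L̄² ‖u − v‖² for all u, v ∈ ℝ^d, set F_m = (1/n) Σ_{i=1}^n F_{m,i}, and assume additionally that each F_m is L-Lipschitz. Fix 𝐳, 𝐰, 𝐳* ∈ (ℝ^d)^M. Let the M·b random indices j_{m,l} be independent and uniformly distributed on {1, …, n}, and define the random vector Δ ∈ (ℝ^d)^M whose m-th block is Δ_m = (1/b) Σ_{l=1}^b [ F_{m,j_{m,l}}(z_m) − F_{m,j_{m,l}}(w_m) ] + F_m(w_m). Then E‖Δ − 𝔽(𝐳*)‖² ≤ (2 L̄²/b) ‖𝐳 − 𝐰‖² + 2 L² ‖𝐳 − 𝐳*‖². -/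
/-!
Write `X i = F m i (z m) - F m i (w m)`, so that `F m (z m) - F m (w m)` is the mean `X̄` of `X`.
Block `m` of `Δ - 𝔽(z*)` is then the minibatch error `(1/b) ∑ₗ X (j_{m,l}) - X̄` plus the
deterministic `F m (z m) - F m (z* m)`, and `‖a + e‖² ≤ 2‖a‖² + 2‖e‖²`. Centring `X` makes the
cross terms between distinct draws vanish in expectation, so the minibatch error has second
moment `(1/b)` times the variance of `X`, which is at most `(1/b) 𝔼 ‖X i‖² ≤ (L̄²/b) ‖z m - w m‖²`;
the deterministic term is bounded by the Lipschitz constant of `F m`. Summing over the blocks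
gives the claim.
-/

open scoped RealInnerProductSpace BigOperators
open Finset

section Marginal

variable {α β γ M : Type*} [Fintype α] [DecidableEq α] [Fintype γ] [Nonempty γ]
  [AddCommMonoid M] [Module ℚ≥0 M]

lemma Fintype.expect_comp_eval (a : α) (f : γ → M) : 𝔼 h : α → γ, f (h a) = 𝔼 c, f c := by
  rw [Fintype.expect_equiv (Equiv.piSplitAt a fun _ => γ) (fun h => f (h a)) (fun p => f p.1)
    fun _ => rfl, ← univ_product_univ, expect_product]
  simp only [Fintype.expect_const]

lemma Fintype.expect_comp_curry_apply [Fintype β] [DecidableEq β] (a : α) (f : (β → γ) → M) :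
    𝔼 ω : α × β → γ, f (fun l => ω (a, l)) = 𝔼 g, f g := by
  rw [Fintype.expect_equiv (Equiv.curry α β γ) (fun ω => f fun l => ω (a, l)) (fun h => f (h a))
    fun _ => rfl]
  exact Fintype.expect_comp_eval a f

end Marginal

section Minibatch

variable {ι V : Type*} [Fintype ι] [NormedAddCommGroup V] [InnerProductSpace ℝ V]

lemma Fintype.expect_inner_left (X : ι → V) (v : V) :
    𝔼 i, ⟪X i, v⟫ = ⟪(Fintype.card ι : ℝ)⁻¹ • ∑ i, X i, v⟫ := by
  rw [Fintype.expect_eq_sum_div_card, ← sum_inner, real_inner_smul_left, div_eq_inv_mul]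

variable [Nonempty ι]

lemma Fintype.expect_norm_sq_sum_comp_of_sum_eq_zero {Y : ι → V} (hY : ∑ i, Y i = 0) (b : ℕ) :
    𝔼 g : Fin b → ι, ‖∑ l, Y (g l)‖ ^ 2 = b * 𝔼 i, ‖Y i‖ ^ 2 := by
  induction b with
  | zero => simp
  | succ b ih =>
    have hcross (v : V) : 𝔼 a, ⟪Y a, v⟫ = 0 := by
      rw [Fintype.expect_inner_left, hY, smul_zero, inner_zero_left]
    rw [Fintype.expect_equiv (Fin.consEquiv fun _ => ι).symm _
      (fun p => ‖Y p.1 + ∑ l, Y (p.2 l)‖ ^ 2) fun g => by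
        simp [Fin.sum_univ_succ, Fin.consEquiv, Fin.tail],
      ← univ_product_univ, expect_product]
    calc 𝔼 a, 𝔼 g : Fin b → ι, ‖Y a + ∑ l, Y (g l)‖ ^ 2
        = 𝔼 a, 𝔼 g : Fin b → ι, (‖Y a‖ ^ 2 + 2 * ⟪Y a, ∑ l, Y (g l)⟫ + ‖∑ l, Y (g l)‖ ^ 2) := by
          simp_rw [norm_add_sq_real]
      _ = 𝔼 a, ‖Y a‖ ^ 2 + 2 * 𝔼 g : Fin b → ι, 𝔼 a, ⟪Y a, ∑ l, Y (g l)⟫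
            + 𝔼 g : Fin b → ι, ‖∑ l, Y (g l)‖ ^ 2 := by
          simp_rw [expect_add_distrib, ← mul_expect, Fintype.expect_const]
          rw [expect_comm]
      _ = (b + 1 : ℕ) * 𝔼 i, ‖Y i‖ ^ 2 := by
          simp_rw [hcross, expect_const_zero, ih]
          push_cast
          ring

lemma Fintype.expect_norm_sub_mean_sq_le (X : ι → V) :
    𝔼 i, ‖X i - (Fintype.card ι : ℝ)⁻¹ • ∑ j, X j‖ ^ 2 ≤ 𝔼 i, ‖X i‖ ^ 2 := by
  set μ := (Fintype.card ι : ℝ)⁻¹ • ∑ j, X j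
  have hcross : 𝔼 i, ⟪X i, μ⟫ = ‖μ‖ ^ 2 := by
    rw [Fintype.expect_inner_left, real_inner_self_eq_norm_sq]
  simp_rw [norm_sub_sq_real, expect_add_distrib, expect_sub_distrib, ← mul_expect, hcross,
    Fintype.expect_const]
  linarith [sq_nonneg ‖μ‖]

lemma Fintype.expect_norm_sq_minibatch_sub_mean_le (X : ι → V) {b : ℕ} (hb : 0 < b) :
    𝔼 g : Fin b → ι, ‖(b : ℝ)⁻¹ • ∑ l, X (g l) - (Fintype.card ι : ℝ)⁻¹ • ∑ i, X i‖ ^ 2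
      ≤ (b : ℝ)⁻¹ * 𝔼 i, ‖X i‖ ^ 2 := by
  set μ := (Fintype.card ι : ℝ)⁻¹ • ∑ i, X i
  have hY : ∑ i, (X i - μ) = 0 := by
    simp [μ, sum_sub_distrib, ← Nat.cast_smul_eq_nsmul ℝ, smul_smul]
  have hcentre (g : Fin b → ι) : (b : ℝ)⁻¹ • ∑ l, X (g l) - μ = (b : ℝ)⁻¹ • ∑ l, (X (g l) - μ) := by
    simp [sum_sub_distrib, smul_sub, ← Nat.cast_smul_eq_nsmul ℝ, smul_smul, hb.ne']
  calc 𝔼 g : Fin b → ι, ‖(b : ℝ)⁻¹ • ∑ l, X (g l) - μ‖ ^ 2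
      = (b : ℝ)⁻¹ ^ 2 * 𝔼 g : Fin b → ι, ‖∑ l, (X (g l) - μ)‖ ^ 2 := by
        simp_rw [hcentre, norm_smul, mul_pow, mul_expect, norm_inv, Real.norm_natCast]
    _ = (b : ℝ)⁻¹ * 𝔼 i, ‖X i - μ‖ ^ 2 := by
        rw [Fintype.expect_norm_sq_sum_comp_of_sum_eq_zero hY]
        field_simp
    _ ≤ (b : ℝ)⁻¹ * 𝔼 i, ‖X i‖ ^ 2 := by
        gcongr (b : ℝ)⁻¹ * ?_
        exact Fintype.expect_norm_sub_mean_sq_le X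

end Minibatch

lemma Fintype.expect_norm_sq_extrapolation_sub_le {ι E V : Type*} [Fintype ι] [Nonempty ι]
    [SeminormedAddCommGroup E] [NormedAddCommGroup V] [InnerProductSpace ℝ V]
    (F : ι → E → V) {Fbar : E → V} (hFbar : ∀ x, Fbar x = (Fintype.card ι : ℝ)⁻¹ • ∑ i, F i x)
    {b : ℕ} (hb : 0 < b) {Lbar L : ℝ} {z w zstar : E}
    (havg : 𝔼 i, ‖F i z - F i w‖ ^ 2 ≤ Lbar ^ 2 * ‖z - w‖ ^ 2)
    (hlip : ‖Fbar z - Fbar zstar‖ ≤ L * ‖z - zstar‖) :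
    𝔼 g : Fin b → ι, ‖(b : ℝ)⁻¹ • ∑ l, (F (g l) z - F (g l) w) + Fbar w - Fbar zstar‖ ^ 2
      ≤ 2 * Lbar ^ 2 / b * ‖z - w‖ ^ 2 + 2 * L ^ 2 * ‖z - zstar‖ ^ 2 := by
  set X := fun i => F i z - F i w
  have hmean : (Fintype.card ι : ℝ)⁻¹ • ∑ i, X i = Fbar z - Fbar w := by
    simp [X, hFbar, smul_sub, sum_sub_distrib]
  have hsplit (g : Fin b → ι) : (b : ℝ)⁻¹ • ∑ l, X (g l) + Fbar w - Fbar zstar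
      = ((b : ℝ)⁻¹ • ∑ l, X (g l) - (Fintype.card ι : ℝ)⁻¹ • ∑ i, X i)
        + (Fbar z - Fbar zstar) := by
    rw [hmean]; abel
  have hlip_sq : ‖Fbar z - Fbar zstar‖ ^ 2 ≤ L ^ 2 * ‖z - zstar‖ ^ 2 := by
    rw [← mul_pow]
    exact pow_le_pow_left₀ (norm_nonneg _) hlip 2
  calc 𝔼 g : Fin b → ι, ‖(b : ℝ)⁻¹ • ∑ l, X (g l) + Fbar w - Fbar zstar‖ ^ 2
      ≤ 𝔼 g : Fin b → ι, (2 * ‖(b : ℝ)⁻¹ • ∑ l, X (g l) - (Fintype.card ι : ℝ)⁻¹ • ∑ i, X i‖ ^ 2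
          + 2 * ‖Fbar z - Fbar zstar‖ ^ 2) := by
        gcongr with g
        rw [hsplit, ← mul_add]
        exact (pow_le_pow_left₀ (norm_nonneg _) (norm_add_le _ _) 2).trans add_sq_le
    _ ≤ 2 * ((b : ℝ)⁻¹ * 𝔼 i, ‖X i‖ ^ 2) + 2 * ‖Fbar z - Fbar zstar‖ ^ 2 := by
        rw [expect_add_distrib, ← mul_expect, Fintype.expect_const]
        gcongr
        exact Fintype.expect_norm_sq_minibatch_sub_mean_le X hb
    _ ≤ 2 * Lbar ^ 2 / b * ‖z - w‖ ^ 2 + 2 * L ^ 2 * ‖z - zstar‖ ^ 2 := by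
        rw [div_eq_mul_inv]
        linarith [mul_le_mul_of_nonneg_left havg (inv_nonneg.2 (Nat.cast_nonneg b))]

theorem stmt_6_general (n b M d : ℕ) (hn : 0 < n) (hb : 0 < b)
    (Lbar L : ℝ)
    (F : Fin M → Fin n → (EuclideanSpace ℝ (Fin d) → EuclideanSpace ℝ (Fin d)))
    (havg : ∀ m, ∀ u v : EuclideanSpace ℝ (Fin d),
      (1 / (n : ℝ)) * ∑ i, ‖F m i u - F m i v‖ ^ 2 ≤ Lbar ^ 2 * ‖u - v‖ ^ 2)
    (Fm : Fin M → EuclideanSpace ℝ (Fin d) → EuclideanSpace ℝ (Fin d))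
    (hFm : ∀ m x, Fm m x = (1 / (n : ℝ)) • ∑ i, F m i x)
    (hlip : ∀ m, ∀ u v : EuclideanSpace ℝ (Fin d), ‖Fm m u - Fm m v‖ ≤ L * ‖u - v‖)
    (z w zstar : PiLp 2 (fun _ : Fin M => EuclideanSpace ℝ (Fin d)))
    (Δ : ((Fin M × Fin b) → Fin n) → PiLp 2 (fun _ : Fin M => EuclideanSpace ℝ (Fin d)))
    (hΔ : ∀ ω m, Δ ω m =
      (1 / (b : ℝ)) • (∑ l : Fin b, (F m (ω (m, l)) (z m) - F m (ω (m, l)) (w m)))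
        + Fm m (w m))
    (Fzstar : PiLp 2 (fun _ : Fin M => EuclideanSpace ℝ (Fin d)))
    (hFzstar : ∀ m, Fzstar m = Fm m (zstar m)) :
    ((Fintype.card ((Fin M × Fin b) → Fin n) : ℝ))⁻¹ * (∑ ω, ‖Δ ω - Fzstar‖ ^ 2) ≤
      (2 * Lbar ^ 2 / b) * ‖z - w‖ ^ 2 + 2 * L ^ 2 * ‖z - zstar‖ ^ 2 := by
  have : Nonempty (Fin n) := ⟨⟨0, hn⟩⟩
  have hblock (m : Fin M) : 𝔼 ω, ‖Δ ω m - Fzstar m‖ ^ 2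
      ≤ 2 * Lbar ^ 2 / b * ‖z m - w m‖ ^ 2 + 2 * L ^ 2 * ‖z m - zstar m‖ ^ 2 := by
    simp only [hΔ, hFzstar, one_div]
    refine (Fintype.expect_comp_curry_apply m fun g => ‖(b : ℝ)⁻¹ • ∑ l,
      (F m (g l) (z m) - F m (g l) (w m)) + Fm m (w m) - Fm m (zstar m)‖ ^ 2).trans_le ?_
    refine Fintype.expect_norm_sq_extrapolation_sub_le (F m) (by simp [hFm]) hb ?_ (hlip m _ _)
    simpa [Fintype.expect_eq_sum_div_card, div_eq_inv_mul] using havg m (z m) (w m)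
  rw [inv_mul_eq_div, ← Fintype.expect_eq_sum_div_card]
  simp only [PiLp.norm_sq_eq_of_L2 fun _ : Fin M => EuclideanSpace ℝ (Fin d), PiLp.sub_apply]
  rw [expect_sum_comm, mul_sum, mul_sum, ← sum_add_distrib]
  exact sum_le_sum fun m _ => hblock m

/-- Second moment of the extrapolation estimator `Δ` of Algorithm 1
(inequality (17) of Lemma E.1): the `M·b` indices `j_{m,l}` are i.i.d. uniform on
`{1,…,n}`, modeled as a uniformly distributed element `ω` of the finite space
`(Fin M × Fin b) → Fin n`. -/
theorem stmt_6 (n b M d : ℕ) (hn : 0 < n) (hb : 0 < b) (hM : 0 < M) (hd : 0 < d)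
    (Lbar L : ℝ) (hLbar : 0 < Lbar) (hL : 0 < L)
    (F : Fin M → Fin n → (EuclideanSpace ℝ (Fin d) → EuclideanSpace ℝ (Fin d)))
    (havg : ∀ m, ∀ u v : EuclideanSpace ℝ (Fin d),
      (1 / (n : ℝ)) * ∑ i, ‖F m i u - F m i v‖ ^ 2 ≤ Lbar ^ 2 * ‖u - v‖ ^ 2)
    (Fm : Fin M → EuclideanSpace ℝ (Fin d) → EuclideanSpace ℝ (Fin d))
    (hFm : ∀ m x, Fm m x = (1 / (n : ℝ)) • ∑ i, F m i x)
    (hlip : ∀ m, ∀ u v : EuclideanSpace ℝ (Fin d), ‖Fm m u - Fm m v‖ ≤ L * ‖u - v‖)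
    (z w zstar : PiLp 2 (fun _ : Fin M => EuclideanSpace ℝ (Fin d)))
    (Δ : ((Fin M × Fin b) → Fin n) → PiLp 2 (fun _ : Fin M => EuclideanSpace ℝ (Fin d)))
    (hΔ : ∀ ω m, Δ ω m =
      (1 / (b : ℝ)) • (∑ l : Fin b, (F m (ω (m, l)) (z m) - F m (ω (m, l)) (w m)))
        + Fm m (w m))
    (Fzstar : PiLp 2 (fun _ : Fin M => EuclideanSpace ℝ (Fin d)))
    (hFzstar : ∀ m, Fzstar m = Fm m (zstar m)) :
    ((Fintype.card ((Fin M × Fin b) → Fin n) : ℝ))⁻¹ * (∑ ω, ‖Δ ω - Fzstar‖ ^ 2) ≤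
      (2 * Lbar ^ 2 / b) * ‖z - w‖ ^ 2 + 2 * L ^ 2 * ‖z - zstar‖ ^ 2 :=
  stmt_6_general n b M d hn hb Lbar L F havg Fm hFm hlip z w zstar Δ hΔ Fzstar hFzstar
end

section
/- Let H be a real inner product space, η > 0, γ ∈ ℝ, and G : H → ℝ. Let z, w, z*, z⁺, Δ, u* ∈ H satisfy (i) η·G(v) ≥ η·G(z⁺) + ⟨z + γ(w − z) − ηΔ − z⁺, v − z⁺⟩ for all v ∈ H, and (ii) G(v) ≥ G(z*) + ⟨−u*, v − z*⟩ for all v ∈ H. Then ‖z⁺ − z*‖² ≤ ‖z − z*‖² + γ‖w − z*‖² − γ‖z − z*‖² − γ‖w − z⁺‖² − 2η⟨Δ − u*, z⁺ − z*⟩ − (1 − γ)‖z⁺ − z‖². -/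
open scoped RealInnerProductSpace

/-- The key one-step proximal inequality (Part 2 of the proof of Lemma E.2). -/
theorem stmt_7 {H : Type*} [NormedAddCommGroup H] [InnerProductSpace ℝ H]
    (η γ : ℝ) (hη : 0 < η) (G : H → ℝ)
    (z w zstar zp Δ ustar : H)
    (h1 : ∀ v, η * G zp + ⟪z + γ • (w - z) - η • Δ - zp, v - zp⟫ ≤ η * G v)
    (h2 : ∀ v, G zstar + ⟪-ustar, v - zstar⟫ ≤ G v) :
    ‖zp - zstar‖ ^ 2 ≤ ‖z - zstar‖ ^ 2 + γ * ‖w - zstar‖ ^ 2 - γ * ‖z - zstar‖ ^ 2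
      - γ * ‖w - zp‖ ^ 2 - 2 * η * ⟪Δ - ustar, zp - zstar⟫ - (1 - γ) * ‖zp - z‖ ^ 2 := by
  have key : ⟪z + γ • (w - z) - η • Δ - zp, zstar - zp⟫ + η * ⟪-ustar, zp - zstar⟫ ≤ 0 := by
    have h1' := h1 zstar
    have h2' := mul_le_mul_of_nonneg_left (h2 zp) hη.le
    rw [mul_add] at h2'
    linarith
  have expand : ‖zp - zstar‖ ^ 2 -
      (‖z - zstar‖ ^ 2 + γ * ‖w - zstar‖ ^ 2 - γ * ‖z - zstar‖ ^ 2
        - γ * ‖w - zp‖ ^ 2 - 2 * η * ⟪Δ - ustar, zp - zstar⟫ - (1 - γ) * ‖zp - z‖ ^ 2)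
      = 2 * (⟪z + γ • (w - z) - η • Δ - zp, zstar - zp⟫ + η * ⟪-ustar, zp - zstar⟫) := by
    simp only [← real_inner_self_eq_norm_sq, inner_sub_left, inner_sub_right,
      inner_add_left, inner_neg_left, real_inner_smul_left]
    rw [real_inner_comm zstar z, real_inner_comm zstar w, real_inner_comm zstar zp,
      real_inner_comm zp z, real_inner_comm zp w, real_inner_comm zstar Δ,
      real_inner_comm zp Δ, real_inner_comm zstar ustar, real_inner_comm zp ustar]
    ring
  linarith
end

section
/- Let H be a real inner product space, L > 0, and F : H → H an L-Lipschitz operator. Let η, θ > 0 satisfy ηL ≤ 1/16 and θη ≤ 1/16. Then for all z, z', z*, y, y' ∈ H: (1/η)‖z − z*‖² + (1/(8η))‖z − z'‖² + (1/(2θ))‖y − y'‖² + 2⟨F(z) − F(z') − (y − y'), z* − z⟩ ≥ (1/(2η))‖z − z*‖². -/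
/-!
Cauchy–Schwarz bounds the cross term below by `-2 (‖F z - F z'‖ + ‖y - y'‖) ‖z - z*‖`, and Young's
inequality with weight `4η` splits each product into `‖z - z*‖² / (4η)` plus a term that the
step-size conditions `ηL ≤ 1/16` and `θη ≤ 1/16` absorb into the `‖z - z'‖²` and `‖y - y'‖²` terms.
-/

open scoped RealInnerProductSpace

lemma two_mul_le_div_add_mul {ε : ℝ} (hε : 0 < ε) (s t : ℝ) :
    2 * s * t ≤ s ^ 2 / ε + ε * t ^ 2 := by
  have key : s ^ 2 / ε + ε * t ^ 2 - 2 * s * t = (s - ε * t) ^ 2 / ε := by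
    field_simp
    ring
  have : 0 ≤ (s - ε * t) ^ 2 / ε := by positivity
  linarith

lemma two_mul_add_mul_le_of_stepsize {η θ p w r d : ℝ} (hη : 0 < η) (hθ : 0 < θ)
    (hp : 0 ≤ p) (hpd : η * p ≤ d / 16) (hθη : θ * η ≤ 1 / 16) :
    2 * (p + w) * r ≤
      (1 / (2 * η)) * r ^ 2 + (1 / (8 * η)) * d ^ 2 + (1 / (2 * θ)) * w ^ 2 := by
  have hηp : 0 ≤ η * p := by positivity
  have hp2 : 4 * η * p ^ 2 ≤ d ^ 2 / (8 * η) := by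
    rw [le_div_iff₀ (by positivity)]
    nlinarith
  have hw2 : 4 * η * w ^ 2 ≤ w ^ 2 / (2 * θ) := by
    rw [le_div_iff₀ (by positivity)]
    nlinarith [sq_nonneg w]
  calc 2 * (p + w) * r = 2 * r * p + 2 * r * w := by ring
    _ ≤ (r ^ 2 / (4 * η) + 4 * η * p ^ 2) + (r ^ 2 / (4 * η) + 4 * η * w ^ 2) :=
      add_le_add (two_mul_le_div_add_mul (by positivity) r p)
        (two_mul_le_div_add_mul (by positivity) r w)
    _ ≤ (r ^ 2 / (4 * η) + d ^ 2 / (8 * η)) + (r ^ 2 / (4 * η) + w ^ 2 / (2 * θ)) := by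
      gcongr
    _ = (1 / (2 * η)) * r ^ 2 + (1 / (8 * η)) * d ^ 2 + (1 / (2 * θ)) * w ^ 2 := by
      field_simp
      ring

lemma neg_two_mul_le_two_inner_sub {H : Type*} [NormedAddCommGroup H] [InnerProductSpace ℝ H]
    (u u' y y' x : H) :
    -(2 * (‖u - u'‖ + ‖y - y'‖) * ‖x‖) ≤ 2 * ⟪u - u' - (y - y'), x⟫ := by
  have hcs := neg_le_of_abs_le (abs_real_inner_le_norm (u - u' - (y - y')) x)
  have htri : ‖u - u' - (y - y')‖ ≤ ‖u - u'‖ + ‖y - y'‖ := norm_sub_le _ _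
  nlinarith [mul_le_mul_of_nonneg_right htri (norm_nonneg x)]

theorem stmt_8_general {H : Type*} [NormedAddCommGroup H] [InnerProductSpace ℝ H]
    (L : ℝ) (F : H → H)
    (hF : ∀ u v : H, ‖F u - F v‖ ≤ L * ‖u - v‖)
    (η θ : ℝ) (hη : 0 < η) (hθ : 0 < θ)
    (hηL : η * L ≤ 1 / 16) (hθη : θ * η ≤ 1 / 16) :
    ∀ z z' zstar y y' : H,
      (1 / (2 * η)) * ‖z - zstar‖ ^ 2 ≤
        (1 / η) * ‖z - zstar‖ ^ 2 + (1 / (8 * η)) * ‖z - z'‖ ^ 2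
          + (1 / (2 * θ)) * ‖y - y'‖ ^ 2
          + 2 * ⟪F z - F z' - (y - y'), zstar - z⟫ := by
  intro z z' zstar y y'
  have hpd : η * ‖F z - F z'‖ ≤ ‖z - z'‖ / 16 := by
    calc η * ‖F z - F z'‖ ≤ η * (L * ‖z - z'‖) := by gcongr; exact hF z z'
      _ = (η * L) * ‖z - z'‖ := by ring
      _ ≤ 1 / 16 * ‖z - z'‖ := by gcongr
      _ = ‖z - z'‖ / 16 := by ring
  have hyoung := two_mul_add_mul_le_of_stepsize (w := ‖y - y'‖) (r := ‖z - zstar‖)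
    hη hθ (norm_nonneg _) hpd hθη
  have hinner := neg_two_mul_le_two_inner_sub (F z) (F z') y y' (zstar - z)
  rw [norm_sub_rev zstar z] at hinner
  have hhalf : 1 / η * ‖z - zstar‖ ^ 2 = 2 * (1 / (2 * η) * ‖z - zstar‖ ^ 2) := by
    field_simp
  linarith

/-- Lower bound `Ψ ≥ (1/(2η))‖z − z*‖²` for the Lyapunov function of Algorithm 1
(end of the proof of Lemma E.2). -/
theorem stmt_8 {H : Type*} [NormedAddCommGroup H] [InnerProductSpace ℝ H]
    (L : ℝ) (hL : 0 < L) (F : H → H)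
    (hF : ∀ u v : H, ‖F u - F v‖ ≤ L * ‖u - v‖)
    (η θ : ℝ) (hη : 0 < η) (hθ : 0 < θ)
    (hηL : η * L ≤ 1 / 16) (hθη : θ * η ≤ 1 / 16) :
    ∀ z z' zstar y y' : H,
      (1 / (2 * η)) * ‖z - zstar‖ ^ 2 ≤
        (1 / η) * ‖z - zstar‖ ^ 2 + (1 / (8 * η)) * ‖z - z'‖ ^ 2
          + (1 / (2 * θ)) * ‖y - y'‖ ^ 2
          + 2 * ⟪F z - F z' - (y - y'), zstar - z⟫ :=
  stmt_8_general L F hF η θ hη hθ hηL hθη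
end

section
/- Let H be a real inner product space, L > 0, and F : H → H an L-Lipschitz operator. Let η_z, η_y > 0 satisfy η_z L ≤ 1/8 and η_z η_y ≤ 1/32. Then for all z, z', z*, y, y' ∈ H: (1/η_z)‖z − z*‖² + (1/(4η_z))‖z − z'‖² + (1/(2η_y))‖y − y'‖² − 2⟨F(z) − F(z') − (y − y'), z − z*⟩ ≥ (1/(4η_z))‖z − z*‖². -/
open scoped RealInnerProductSpace

/-- Lower bound `Ψ ≥ (1/(4η_z))‖z − z*‖²` for the Lyapunov function of Algorithm 2
(end of the proof of Lemma F.2). -/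
theorem stmt_9 {H : Type*} [NormedAddCommGroup H] [InnerProductSpace ℝ H]
    (L : ℝ) (hL : 0 < L) (F : H → H)
    (hF : ∀ u v : H, ‖F u - F v‖ ≤ L * ‖u - v‖)
    (ηz ηy : ℝ) (hηz : 0 < ηz) (hηy : 0 < ηy)
    (hηzL : ηz * L ≤ 1 / 8) (hηzηy : ηz * ηy ≤ 1 / 32) :
    ∀ z z' zstar y y' : H,
      (1 / (4 * ηz)) * ‖z - zstar‖ ^ 2 ≤
        (1 / ηz) * ‖z - zstar‖ ^ 2 + (1 / (4 * ηz)) * ‖z - z'‖ ^ 2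
          + (1 / (2 * ηy)) * ‖y - y'‖ ^ 2
          - 2 * ⟪F z - F z' - (y - y'), z - zstar⟫ := by
  intro z z' zstar y y'
  set a := ‖z - z'‖ with ha
  set b := ‖y - y'‖ with hb
  set Z := ‖z - zstar‖ with hZdef
  have hZ0 : 0 ≤ Z := norm_nonneg _
  have ha0 : 0 ≤ a := norm_nonneg _
  have hb0 : 0 ≤ b := norm_nonneg _
  -- bound the inner product
  have hinner : ⟪F z - F z' - (y - y'), z - zstar⟫ ≤ L * a * Z + b * Z := by
    have hsplit : ⟪F z - F z' - (y - y'), z - zstar⟫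
        = ⟪F z - F z', z - zstar⟫ - ⟪y - y', z - zstar⟫ := inner_sub_left _ _ _
    have h1 : ⟪F z - F z', z - zstar⟫ ≤ L * a * Z := by
      calc ⟪F z - F z', z - zstar⟫ ≤ ‖F z - F z'‖ * ‖z - zstar‖ :=
            real_inner_le_norm _ _
        _ ≤ L * a * Z := by
            have := hF z z'
            nlinarith
    have h2 : ⟪y' - y, z - zstar⟫ ≤ b * Z := by
      calc ⟪y' - y, z - zstar⟫ ≤ ‖y' - y‖ * ‖z - zstar‖ := real_inner_le_norm _ _
        _ = b * Z := by rw [norm_sub_rev]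
    have hneg : ⟪y' - y, z - zstar⟫ = -⟪y - y', z - zstar⟫ := by
      rw [← inner_neg_left, neg_sub]
    rw [hsplit]
    linarith [hneg.symm.le, hneg.symm.ge]
  -- Young-type inequality for the Lipschitz term
  have e1 : (1/(4*ηz)) * (a - 4*ηz*L*Z)^2
      = (1/(4*ηz))*a^2 - 2*(L*a*Z) + 4*ηz*L^2*Z^2 := by
    field_simp
    ring
  have key1 : 2*(L*a*Z) ≤ (1/(4*ηz))*a^2 + (1/(16*ηz))*Z^2 := by
    have hpos : 0 ≤ (1/(4*ηz)) * (a - 4*ηz*L*Z)^2 := by positivity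
    have hc : 4*ηz*L^2 ≤ 1/(16*ηz) := by
      rw [le_div_iff₀ (by positivity)]
      nlinarith [mul_pos hηz hL, mul_le_mul hηzL hηzL (le_of_lt (mul_pos hηz hL)) (by norm_num : (0:ℝ) ≤ 1/8)]
    have hc' : 4*ηz*L^2*Z^2 ≤ (1/(16*ηz))*Z^2 :=
      mul_le_mul_of_nonneg_right hc (sq_nonneg Z)
    nlinarith [e1, hpos]
  -- Young-type inequality for the y term
  have e2 : (1/(2*ηy)) * (b - 2*ηy*Z)^2
      = (1/(2*ηy))*b^2 - 2*(b*Z) + 2*ηy*Z^2 := by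
    field_simp
    ring
  have key2 : 2*(b*Z) ≤ (1/(2*ηy))*b^2 + (1/(16*ηz))*Z^2 := by
    have hpos : 0 ≤ (1/(2*ηy)) * (b - 2*ηy*Z)^2 := by positivity
    have hc : 2*ηy ≤ 1/(16*ηz) := by
      rw [le_div_iff₀ (by positivity)]
      nlinarith
    have hc' : 2*ηy*Z^2 ≤ (1/(16*ηz))*Z^2 :=
      mul_le_mul_of_nonneg_right hc (sq_nonneg Z)
    nlinarith [e2, hpos]
  -- combine
  have hsum : (1/ηz)*Z^2 - (1/(4*ηz))*Z^2 = (3/(4*ηz))*Z^2 := by ring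
  have hsum2 : (1/(16*ηz))*Z^2 + (1/(16*ηz))*Z^2 = (1/(8*ηz))*Z^2 := by ring
  have h8 : (1/(8*ηz))*Z^2 ≤ (3/(4*ηz))*Z^2 := by
    have h : (1:ℝ)/(8*ηz) ≤ 3/(4*ηz) := by
      rw [div_le_div_iff₀ (by positivity) (by positivity)]
      linarith
    exact mul_le_mul_of_nonneg_right h (sq_nonneg Z)
  linarith
end

section
/- Let d, n be positive integers and let L̄, μ be reals with 0 < μ and μ√n ≤ L̄. Set c = L̄/(4√n) and define G_x(x, y) = c·A₁ y + (μ/3)x and G_y(x, y) = c·A₁ᵀ x − (μ/3)y + (L̄²/(2nμ)) e₁ for x, y ∈ ℝ^d. Then for all x₁, x₂, y₁, y₂ ∈ ℝ^d: ‖G_x(x₁, y₁) − G_x(x₂, y₂)‖² + ‖G_y(x₁, y₁) − G_y(x₂, y₂)‖² ≤ (L̄²/n)(‖x₁ − x₂‖² + ‖y₁ − y₂‖²). -/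
/-!
With `u = x₁ - x₂` and `v = y₁ - y₂`, the constant `e₁` term cancels and the two differences are
`c A₁ v + (μ/3) u` and `c A₁ᵀ u - (μ/3) v`. Their cross terms cancel since `⟪A₁ v, u⟫ = ⟪v, A₁ᵀ u⟫`,
and every row and column of `A₁` has absolute sum at most `3`, so Schur's test gives
`‖A₁‖, ‖A₁ᵀ‖ ≤ 3`. Hence the left side is at most `(9c² + μ²/9)(‖u‖² + ‖v‖²)`, and
`9c² = (9/16) L̄²/n` while `μ² ≤ L̄²/n`.
-/

/-- The matrix `A₁` of the lower-bound construction (1 on the diagonal, `−2` on the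
superdiagonal in the rows with even 1-based index, i.e. odd 0-based index). -/
def lowerA1 (d : ℕ) : Matrix (Fin d) (Fin d) ℝ := fun i j =>
  if i = j then 1 else if j.val = i.val + 1 ∧ i.val % 2 = 1 then -2 else 0

open Finset Matrix

theorem Finset.sum_boole_le_one {ι : Type*} [Fintype ι] (p : ι → Prop) [DecidablePred p]
    (hp : ∀ a b, p a → p b → a = b) : ∑ i, (if p i then (1 : ℝ) else 0) ≤ 1 := by
  rw [sum_boole]
  exact_mod_cast card_le_one.mpr fun a ha b hb => hp a b (mem_filter.mp ha).2 (mem_filter.mp hb).2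

/-- Schur's test, via Cauchy–Schwarz with weights `|A i j|`. -/
theorem Matrix.sum_sq_mulVec_le {m n : Type*} [Fintype m] [Fintype n] (A : Matrix m n ℝ)
    {R C : ℝ} (hR₀ : 0 ≤ R) (hR : ∀ i, ∑ j, |A i j| ≤ R) (hC : ∀ j, ∑ i, |A i j| ≤ C)
    (v : n → ℝ) : ∑ i, (A *ᵥ v) i ^ 2 ≤ R * C * ∑ j, v j ^ 2 := by
  calc ∑ i, (A *ᵥ v) i ^ 2 ≤ ∑ i, (∑ j, |A i j|) * ∑ j, |A i j| * v j ^ 2 := by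
        gcongr with i
        refine sum_sq_le_sum_mul_sum_of_sq_le_mul _ (fun j _ => abs_nonneg _)
          (fun j _ => by positivity) fun j _ => le_of_eq ?_
        rw [mul_pow, ← sq_abs (A i j)]
        ring
    _ ≤ ∑ i, R * ∑ j, |A i j| * v j ^ 2 := by
        gcongr with i
        exact hR i
    _ = R * ∑ j, v j ^ 2 * ∑ i, |A i j| := by
        rw [← mul_sum, sum_comm]
        simp only [mul_sum, mul_comm]
    _ ≤ R * ∑ j, v j ^ 2 * C := by
        gcongr with j
        exact hC j
    _ = R * C * ∑ j, v j ^ 2 := by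
        rw [← sum_mul]
        ring

theorem abs_lowerA1_le {d : ℕ} (i j : Fin d) :
    |lowerA1 d i j| ≤ (if i = j then (1 : ℝ) else 0) + 2 * if i.val + 1 = j.val then 1 else 0 := by
  unfold lowerA1
  split_ifs <;> norm_num
  omega

theorem sum_abs_lowerA1_row_le {d : ℕ} (i : Fin d) : ∑ j, |lowerA1 d i j| ≤ 3 := by
  calc ∑ j, |lowerA1 d i j|
      ≤ ∑ j, ((if i = j then (1 : ℝ) else 0) + 2 * if i.val + 1 = j.val then 1 else 0) :=
        sum_le_sum fun j _ => abs_lowerA1_le i j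
    _ ≤ 1 + 2 * 1 := by
        rw [sum_add_distrib, ← mul_sum]
        gcongr
        · exact sum_boole_le_one _ fun a b ha hb => ha.symm.trans hb
        · exact sum_boole_le_one _ fun a b ha hb => Fin.ext (by omega)
    _ = 3 := by norm_num

theorem sum_abs_lowerA1_col_le {d : ℕ} (j : Fin d) : ∑ i, |lowerA1 d i j| ≤ 3 := by
  calc ∑ i, |lowerA1 d i j|
      ≤ ∑ i, ((if i = j then (1 : ℝ) else 0) + 2 * if i.val + 1 = j.val then 1 else 0) :=
        sum_le_sum fun i _ => abs_lowerA1_le i j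
    _ ≤ 1 + 2 * 1 := by
        rw [sum_add_distrib, ← mul_sum]
        gcongr
        · exact sum_boole_le_one _ fun a b ha hb => ha.trans hb.symm
        · exact sum_boole_le_one _ fun a b ha hb => Fin.ext (by omega)
    _ = 3 := by norm_num

theorem sum_sq_lowerA1_mulVec_le {d : ℕ} (v : Fin d → ℝ) :
    ∑ i, (lowerA1 d *ᵥ v) i ^ 2 ≤ 9 * ∑ i, v i ^ 2 := by
  simpa only [show (3 : ℝ) * 3 = 9 by norm_num] using
    (lowerA1 d).sum_sq_mulVec_le (by norm_num) sum_abs_lowerA1_row_le sum_abs_lowerA1_col_le v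

theorem sum_sq_lowerA1_transpose_mulVec_le {d : ℕ} (u : Fin d → ℝ) :
    ∑ i, ((lowerA1 d)ᵀ *ᵥ u) i ^ 2 ≤ 9 * ∑ i, u i ^ 2 := by
  simpa only [show (3 : ℝ) * 3 = 9 by norm_num] using
    (lowerA1 d)ᵀ.sum_sq_mulVec_le (by norm_num) sum_abs_lowerA1_col_le sum_abs_lowerA1_row_le u

theorem sum_sq_mulVec_add_sum_sq_transpose_mulVec_sub {m n : Type*} [Fintype m] [Fintype n]
    (A : Matrix m n ℝ) (u : m → ℝ) (v : n → ℝ) (c s : ℝ) :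
    ∑ i, (c * (A *ᵥ v) i + s * u i) ^ 2 + ∑ j, (c * (Aᵀ *ᵥ u) j - s * v j) ^ 2 =
      c ^ 2 * (∑ i, (A *ᵥ v) i ^ 2 + ∑ j, (Aᵀ *ᵥ u) j ^ 2) +
        s ^ 2 * (∑ i, u i ^ 2 + ∑ j, v j ^ 2) := by
  have hadj : ∑ i, (A *ᵥ v) i * u i = ∑ j, (Aᵀ *ᵥ u) j * v j := by
    simpa only [dotProduct, mul_comm, mulVec_transpose] using dotProduct_mulVec u A v
  have hadd : ∀ a b : ℝ, (c * a + s * b) ^ 2 = c ^ 2 * a ^ 2 + s ^ 2 * b ^ 2 + 2 * c * s * (a * b) :=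
    fun a b => by ring
  have hsub : ∀ a b : ℝ, (c * a - s * b) ^ 2 = c ^ 2 * a ^ 2 + s ^ 2 * b ^ 2 - 2 * c * s * (a * b) :=
    fun a b => by ring
  simp only [hadd, hsub, sum_add_distrib, sum_sub_distrib, ← mul_sum, hadj]
  ring

theorem nine_mul_sq_add_sq_le_sq_div {n : ℕ} (hn : 0 < n) {Lbar μ : ℝ} (hμ : 0 < μ)
    (hLμ : μ * Real.sqrt n ≤ Lbar) :
    9 * (Lbar / (4 * Real.sqrt n)) ^ 2 + (μ / 3) ^ 2 ≤ Lbar ^ 2 / n := by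
  have hn' : (0 : ℝ) < n := Nat.cast_pos.mpr hn
  have hμ_sq : μ ^ 2 ≤ Lbar ^ 2 / n := by
    rw [le_div_iff₀ hn', ← Real.sq_sqrt hn'.le, ← mul_pow]
    exact pow_le_pow_left₀ (by positivity) hLμ 2
  have hc_sq : (Lbar / (4 * Real.sqrt n)) ^ 2 = Lbar ^ 2 / n / 16 := by
    rw [div_pow, mul_pow, Real.sq_sqrt hn'.le]
    ring
  rw [hc_sq]
  have : 0 ≤ Lbar ^ 2 / n := by positivity
  linarith [show (μ / 3) ^ 2 = μ ^ 2 / 9 by ring]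

theorem stmt_11_general (d n : ℕ) (hn : 0 < n)
    (Lbar μ : ℝ) (hμ : 0 < μ) (hLμ : μ * Real.sqrt n ≤ Lbar)
    (c : ℝ) (hc : c = Lbar / (4 * Real.sqrt n))
    (Gx : (Fin d → ℝ) → (Fin d → ℝ) → (Fin d → ℝ))
    (Gy : (Fin d → ℝ) → (Fin d → ℝ) → (Fin d → ℝ))
    (hGx : ∀ x y i, Gx x y i = c * (lowerA1 d).mulVec y i + (μ / 3) * x i)
    (hGy : ∀ x y i, Gy x y i = c * ((lowerA1 d).transpose.mulVec x) i - (μ / 3) * y i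
        + (Lbar ^ 2 / (2 * n * μ)) * (if i.val = 0 then 1 else 0)) :
    ∀ x₁ x₂ y₁ y₂ : Fin d → ℝ,
      (∑ i, (Gx x₁ y₁ i - Gx x₂ y₂ i) ^ 2) + (∑ i, (Gy x₁ y₁ i - Gy x₂ y₂ i) ^ 2) ≤
        (Lbar ^ 2 / n) * ((∑ i, (x₁ i - x₂ i) ^ 2) + (∑ i, (y₁ i - y₂ i) ^ 2)) := by
  intro x₁ x₂ y₁ y₂
  set u := x₁ - x₂
  set v := y₁ - y₂
  have hGx_sub : ∀ i, Gx x₁ y₁ i - Gx x₂ y₂ i = c * (lowerA1 d *ᵥ v) i + μ / 3 * u i := by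
    intro i
    simp only [hGx, u, v, mulVec_sub, Pi.sub_apply]
    ring
  have hGy_sub : ∀ i, Gy x₁ y₁ i - Gy x₂ y₂ i = c * ((lowerA1 d)ᵀ *ᵥ u) i - μ / 3 * v i := by
    intro i
    simp only [hGy, u, v, mulVec_sub, Pi.sub_apply]
    ring
  simp only [hGx_sub, hGy_sub, sum_sq_mulVec_add_sum_sq_transpose_mulVec_sub]
  calc c ^ 2 * (∑ i, (lowerA1 d *ᵥ v) i ^ 2 + ∑ i, ((lowerA1 d)ᵀ *ᵥ u) i ^ 2) +
        (μ / 3) ^ 2 * (∑ i, u i ^ 2 + ∑ i, v i ^ 2)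
      ≤ c ^ 2 * (9 * ∑ i, v i ^ 2 + 9 * ∑ i, u i ^ 2) +
        (μ / 3) ^ 2 * (∑ i, u i ^ 2 + ∑ i, v i ^ 2) := by
        gcongr
        · exact sum_sq_lowerA1_mulVec_le v
        · exact sum_sq_lowerA1_transpose_mulVec_le u
    _ = (9 * c ^ 2 + (μ / 3) ^ 2) * (∑ i, u i ^ 2 + ∑ i, v i ^ 2) := by ring
    _ ≤ Lbar ^ 2 / n * (∑ i, u i ^ 2 + ∑ i, v i ^ 2) := by
        gcongr
        exact hc ▸ nine_mul_sq_add_sq_le_sq_div hn hμ hLμ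

/-- `L`-smoothness (with `L = L̄/√n`) of the hard-instance local function `f₁`:
the map `(x,y) ↦ (∇ₓ f₁, ∇_y f₁)` is `L̄/√n`-Lipschitz. -/
theorem stmt_11 (d n : ℕ) (hd : 0 < d) (hn : 0 < n)
    (Lbar μ : ℝ) (hμ : 0 < μ) (hLμ : μ * Real.sqrt n ≤ Lbar)
    (c : ℝ) (hc : c = Lbar / (4 * Real.sqrt n))
    (Gx : (Fin d → ℝ) → (Fin d → ℝ) → (Fin d → ℝ))
    (Gy : (Fin d → ℝ) → (Fin d → ℝ) → (Fin d → ℝ))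
    (hGx : ∀ x y i, Gx x y i = c * (lowerA1 d).mulVec y i + (μ / 3) * x i)
    (hGy : ∀ x y i, Gy x y i = c * ((lowerA1 d).transpose.mulVec x) i - (μ / 3) * y i
        + (Lbar ^ 2 / (2 * n * μ)) * (if i.val = 0 then 1 else 0)) :
    ∀ x₁ x₂ y₁ y₂ : Fin d → ℝ,
      (∑ i, (Gx x₁ y₁ i - Gx x₂ y₂ i) ^ 2) + (∑ i, (Gy x₁ y₁ i - Gy x₂ y₂ i) ^ 2) ≤
        (Lbar ^ 2 / n) * ((∑ i, (x₁ i - x₂ i) ^ 2) + (∑ i, (y₁ i - y₂ i) ^ 2)) :=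
  stmt_11_general d n hn Lbar μ hμ hLμ c hc Gx Gy hGx hGy
end

section
/- Let α be a real number with 0 < α ≤ 2 and let q = (2 + α − √(α² + 4α))/2. Then 0 < q < 1, q² − (2 + α)q + 1 = 0, and 1/ln(1/q) ≥ q/(1 − q) ≥ (1/8)(1 + √(4/α + 1)). -/
/-- Properties of the geometric rate `q = (2 + α − √(α² + 4α))/2` for `0 < α ≤ 2`:
`q ∈ (0,1)`, `q` is a root of `q² − (2+α)q + 1 = 0`, and
`1/ln(1/q) ≥ q/(1−q) ≥ (1/8)(1 + √(4/α + 1))`. -/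
theorem stmt_16 (α : ℝ) (hα : 0 < α) (hα2 : α ≤ 2)
    (q : ℝ) (hq : q = (2 + α - Real.sqrt (α ^ 2 + 4 * α)) / 2) :
    0 < q ∧ q < 1 ∧ q ^ 2 - (2 + α) * q + 1 = 0 ∧
      q / (1 - q) ≤ 1 / Real.log (1 / q) ∧
      (1 / 8) * (1 + Real.sqrt (4 / α + 1)) ≤ q / (1 - q) := by
  set s := Real.sqrt (α ^ 2 + 4 * α) with hs
  have hsnn : 0 ≤ s := Real.sqrt_nonneg _
  have hssq : s ^ 2 = α ^ 2 + 4 * α := Real.sq_sqrt (by nlinarith)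
  have hslt : s < 2 + α := by
    rw [hs, show (2 + α) = Real.sqrt ((2 + α) ^ 2) from
      (Real.sqrt_sq (by linarith)).symm]
    exact Real.sqrt_lt_sqrt (by nlinarith) (by nlinarith)
  have hsgt : α < s := by
    rw [hs]
    exact (Real.lt_sqrt hα.le).mpr (by nlinarith)
  have hsle : s ≤ α + 3 / 2 := by
    rw [hs, show (α + 3 / 2) = Real.sqrt ((α + 3 / 2) ^ 2) from
      (Real.sqrt_sq (by linarith)).symm]
    exact Real.sqrt_le_sqrt (by nlinarith)
  have hq0 : 0 < q := by rw [hq]; linarith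
  have hq1 : q < 1 := by rw [hq]; linarith
  have h1q : 0 < 1 - q := by linarith
  have hroot : q ^ 2 - (2 + α) * q + 1 = 0 := by rw [hq]; nlinarith
  refine ⟨hq0, hq1, hroot, ?_, ?_⟩
  · have hlpos : 0 < Real.log (1 / q) :=
      Real.log_pos (by rw [lt_div_iff₀ hq0]; linarith)
    have hlle : Real.log (1 / q) ≤ 1 / q - 1 :=
      Real.log_le_sub_one_of_pos (by positivity)
    rw [div_le_div_iff₀ h1q hlpos]
    have : q * Real.log (1 / q) ≤ q * (1 / q - 1) :=
      mul_le_mul_of_nonneg_left hlle hq0.le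
    have h2 : q * (1 / q - 1) = 1 - q := by field_simp
    linarith [this, h2 ▸ this]
  · have hsq : Real.sqrt (4 / α + 1) = s / α := by
      rw [show 4 / α + 1 = (s / α) ^ 2 by
        field_simp; nlinarith]
      exact Real.sqrt_sq (by positivity)
    have hfin : (1:ℝ)/8*(1+s/α) = (α+s)/(8*α) := by field_simp
    rw [hsq, hfin, div_le_div_iff₀ (by positivity) h1q]
    nlinarith [hssq, hsle, hα, hq]
end

section
/- Let d, k be positive integers with 2k ≤ d, let q ∈ (0, 1), and let ȳ ∈ ℝ^d have entries ȳ_j = q^j/(1 − q) for 1 ≤ j ≤ d. If ŷ ∈ ℝ^d satisfies ŷ_j = 0 for all j with k < j ≤ d, then ‖ŷ − ȳ‖ ≥ (q^k/√2)‖ȳ‖. -/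
lemma aux17 (d k : ℕ) (hk : 0 < k) (hkd : 2 * k ≤ d)
    (q : ℝ) (hq0 : 0 < q) (hq1 : q < 1) :
    q ^ (2 * k) / 2 * ∑ i ∈ Finset.range d, q ^ (2 * (i + 1)) / (1 - q) ^ 2 ≤
      ∑ i ∈ Finset.Ico k d, q ^ (2 * (i + 1)) / (1 - q) ^ 2 := by
  set g : ℕ → ℝ := fun i => q ^ (2 * (i + 1)) / (1 - q) ^ 2 with hg
  have hkd' : k ≤ d := le_trans (by omega) hkd
  have hgnn : ∀ i, 0 ≤ g i := fun i => by
    apply div_nonneg (by positivity) (by positivity)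
  have h1 : q ^ (2 * k) * ∑ i ∈ Finset.range d, g i = ∑ i ∈ Finset.Ico k (d + k), g i := by
    rw [Finset.mul_sum, Finset.sum_Ico_eq_sum_range]
    simp only [Nat.add_sub_cancel]
    refine Finset.sum_congr rfl fun i _ => ?_
    simp only [hg]
    have he : 2 * (k + i + 1) = 2 * k + 2 * (i + 1) := by ring
    rw [he, pow_add, mul_div_assoc]
  have h2 : ∑ i ∈ Finset.Ico k (d + k), g i
      = ∑ i ∈ Finset.Ico k d, g i + ∑ i ∈ Finset.Ico d (d + k), g i := by
    rw [Finset.sum_Ico_consecutive _ hkd' (Nat.le_add_right d k)]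
  have h3 : ∑ i ∈ Finset.Ico d (d + k), g i ≤ ∑ i ∈ Finset.Ico k (k + k), g i := by
    rw [Finset.sum_Ico_eq_sum_range, Finset.sum_Ico_eq_sum_range]
    simp only [Nat.add_sub_cancel_left]
    refine Finset.sum_le_sum fun i _ => ?_
    simp only [hg]
    apply div_le_div_of_nonneg_right _ (by positivity)
    exact pow_le_pow_of_le_one hq0.le hq1.le (by omega)
  have h4 : ∑ i ∈ Finset.Ico k (k + k), g i ≤ ∑ i ∈ Finset.Ico k d, g i := by
    apply Finset.sum_le_sum_of_subset_of_nonneg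
    · exact Finset.Ico_subset_Ico le_rfl (by omega)
    · exact fun i _ _ => hgnn i
  nlinarith [h1, h2, h3, h4]

/-- Key estimate of Lemma D.4: any vector `ŷ` whose coordinates beyond the `k`-th
(1-based) vanish is at Euclidean distance at least `(q^k/√2)‖ȳ‖` from the geometric
vector `ȳ_j = q^j/(1−q)`. -/
theorem stmt_17 (d k : ℕ) (hd : 0 < d) (hk : 0 < k) (hkd : 2 * k ≤ d)
    (q : ℝ) (hq0 : 0 < q) (hq1 : q < 1)
    (ybar : Fin d → ℝ) (hybar : ∀ j, ybar j = q ^ (j.val + 1) / (1 - q))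
    (yhat : Fin d → ℝ) (hyhat : ∀ j : Fin d, k < j.val + 1 → yhat j = 0) :
    (q ^ k / Real.sqrt 2) * Real.sqrt (∑ j, (ybar j) ^ 2) ≤
      Real.sqrt (∑ j, (yhat j - ybar j) ^ 2) := by
  have h1q : (0:ℝ) < 1 - q := by linarith
  set g : ℕ → ℝ := fun i => q ^ (2 * (i + 1)) / (1 - q) ^ 2 with hg
  have hgy : ∀ j : Fin d, (ybar j) ^ 2 = g j.val := by
    intro j
    rw [hybar j]
    simp only [hg]
    rw [div_pow, ← pow_mul]
    ring_nf
  have hA : ∑ j, (ybar j) ^ 2 = ∑ i ∈ Finset.range d, g i := by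
    rw [← Fin.sum_univ_eq_sum_range]
    exact Finset.sum_congr rfl fun j _ => hgy j
  have hfilter : (Finset.range d).filter (fun i => k ≤ i) = Finset.Ico k d := by
    ext i
    simp only [Finset.mem_filter, Finset.mem_range, Finset.mem_Ico]
    omega
  have hB : ∑ i ∈ Finset.Ico k d, g i ≤ ∑ j, (yhat j - ybar j) ^ 2 := by
    rw [← hfilter, Finset.sum_filter,
      ← Fin.sum_univ_eq_sum_range (fun i => if k ≤ i then g i else 0) d]
    refine Finset.sum_le_sum fun j _ => ?_
    by_cases h : k ≤ j.val
    · rw [if_pos h, hyhat j (by omega), zero_sub, neg_sq, hgy]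
    · rw [if_neg h]
      positivity
  have key : (q ^ k / Real.sqrt 2) ^ 2 * ∑ j, (ybar j) ^ 2 ≤ ∑ j, (yhat j - ybar j) ^ 2 := by
    have hsq : (q ^ k / Real.sqrt 2) ^ 2 = q ^ (2 * k) / 2 := by
      rw [div_pow, Real.sq_sqrt (by norm_num : (0:ℝ) ≤ 2), ← pow_mul]
      ring_nf
    rw [hsq, hA]
    exact le_trans (aux17 d k hk hkd q hq0 hq1) hB
  calc (q ^ k / Real.sqrt 2) * Real.sqrt (∑ j, (ybar j) ^ 2)
      = Real.sqrt ((q ^ k / Real.sqrt 2) ^ 2 * ∑ j, (ybar j) ^ 2) := by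
        rw [Real.sqrt_mul (sq_nonneg _), Real.sqrt_sq (by positivity)]
    _ ≤ Real.sqrt (∑ j, (yhat j - ybar j) ^ 2) := Real.sqrt_le_sqrt key
end
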